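/- Define K_{n,i}(x) = T_{n,i}(x) + T_{n,n+i}(x) for 0 ≤ i ≤ n−1 and K_{n,i}(x) = x·T_{n,i−n}(x) + T_{n,i}(x) for n ≤ i ≤ 2n−1. Then for n ≥ 3 and 0 ≤ i ≤ 2n−1, K_{n,i}(x) = x·Σ_{j=0}^{⌈(n−1)i/n⌉−1} K_{n−1,j}(x) + Σ_{j=⌈(n−1)i/n⌉}^{2n−3} K_{n−1,j}(x), i.e., the K_{n,i} satisfy the same recurrence as the T_{n,i}. -/

import Mathlib

open Polynomial

/-- `f` has only real zeros (every complex zero is real). -/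
def RealRooted (f : Polynomial ℝ) : Prop :=
  ∀ z : ℂ, z ∈ (f.map (algebraMap ℝ ℂ)).roots → z.im = 0

/-- all zeros of `f` are real (counted with multiplicity). -/
def AllRealRoots (f : Polynomial ℝ) : Prop :=
  f.roots.card = f.natDegree

/-- two polynomials are compatible if every nonnegative linear combination
has only real zeros. -/
def Compatible (f g : Polynomial ℝ) : Prop :=
  ∀ c d : ℝ, 0 ≤ c → 0 ≤ d → RealRooted (C c * f + C d * g)

/-- `Interlaces g f` means `g ⪯ f`: both are real-rooted with positive leading
coefficients, and listing the zeros in decreasing order `u` (of `f`) and `v`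
(of `g`), either `deg f = deg g` and `vₙ ≤ uₙ ≤ ⋯ ≤ v₁ ≤ u₁`, or
`deg f = deg g + 1` and `uₙ ≤ vₙ₋₁ ≤ ⋯ ≤ v₁ ≤ u₁`. -/
def Interlaces (g f : Polynomial ℝ) : Prop :=
  0 < f.leadingCoeff ∧ 0 < g.leadingCoeff ∧
  ∃ u v : List ℝ,
    u.Pairwise (· ≥ ·) ∧ v.Pairwise (· ≥ ·) ∧
    f.roots = (u : Multiset ℝ) ∧ g.roots = (v : Multiset ℝ) ∧
    u.length = f.natDegree ∧ v.length = g.natDegree ∧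
    (u.length = v.length ∨ u.length = v.length + 1) ∧
    (∀ (i : ℕ) (hv : i < v.length) (hu : i < u.length),
      v.get ⟨i, hv⟩ ≤ u.get ⟨i, hu⟩) ∧
    (∀ (i : ℕ) (hu : i + 1 < u.length) (hv : i < v.length),
      u.get ⟨i + 1, hu⟩ ≤ v.get ⟨i, hv⟩)

/-- the finite set of type `D` inversion sequences: `e : Fin n → ℕ` with
`e i < 2(i+1)`. -/
def invSeqs (n : ℕ) : Finset (Fin n → ℕ) :=
  ((Finset.univ : Finset (Fin n → Fin (2 * n + 1))).image
      (fun e => fun i => (e i : ℕ))).filter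
    (fun e => ∀ i : Fin n, e i < 2 * ((i : ℕ) + 1))

/-- value of an inversion sequence at (0-indexed) position `i`. -/
def ev {n : ℕ} (e : Fin n → ℕ) (i : ℕ) : ℕ :=
  if h : i < n then e ⟨i, h⟩ else 0

/-- the type `D` ascent statistic:
`asc_D e = χ(e₁ + e₂/2 ≥ 3/2) + #{i ∈ [n-1] : eᵢ/i < eᵢ₊₁/(i+1)}`
(1-indexed). -/
noncomputable def ascD {n : ℕ} (e : Fin n → ℕ) : ℕ :=
  (if 3 ≤ 2 * ev e 0 + ev e 1 then 1 else 0) +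
    ((Finset.Ico 1 n).filter
      (fun i => (i + 1) * ev e (i - 1) < i * ev e i)).card

/-- `exc e = #{i : eᵢ ≥ i}` (1-indexed). -/
noncomputable def excD {n : ℕ} (e : Fin n → ℕ) : ℕ :=
  ((Finset.range n).filter (fun j => j + 1 ≤ ev e j)).card

/-- the affine type `D` ascent statistic:
`ãsc_D e = asc_D e + χ(e_{n-1}/(n-1) + e_n/n < (2n-1)/n)`. -/
noncomputable def affAscD {n : ℕ} (e : Fin n → ℕ) : ℕ :=
  ascD e +
    (if n * ev e (n - 2) + (n - 1) * ev e (n - 1) < (n - 1) * (2 * n - 1)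
      then 1 else 0)

/-- the refined Eulerian polynomial `T_{n,i}(x)` of type `D`. -/
noncomputable def TD (n i : ℕ) : Polynomial ℝ :=
  ∑ e ∈ (invSeqs n).filter (fun e => ev e (n - 1) = i), X ^ ascD e

/-- the refined `q`-Eulerian polynomial `T_{n,i}(x;q)` of type `D`. -/
noncomputable def TqD (n i : ℕ) (q : ℝ) : Polynomial ℝ :=
  ∑ e ∈ (invSeqs n).filter (fun e => ev e (n - 1) = i),
    C q ^ excD e * X ^ ascD e

/-- the refined affine Eulerian polynomial `T̃_{n,i}(x)` of type `D`. -/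
noncomputable def TtD (n i : ℕ) : Polynomial ℝ :=
  ∑ e ∈ (invSeqs n).filter (fun e => ev e (n - 1) = i), X ^ affAscD e

/-- the polynomials `K_{n,i}(x)`. -/
noncomputable def KD (n i : ℕ) : Polynomial ℝ :=
  if i < n then TD n i + TD n (n + i) else X * TD n (i - n) + TD n i

/-! The recurrence for `T_{m+1,i}` comes from deleting the last entry `i` of a sequence: this
raises the ascent count by one exactly when `(m+1) e_m < m i`, i.e. `e_m < ⌈m i/(m+1)⌉`. The
recurrence for `K` is then pure bookkeeping: writing both sides as sums over `j < m` of the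
pairs `T_{m,j}, T_{m,m+j}`, the cut-off for `i + m + 1` is the cut-off for `i` shifted by `m`. -/

section CutSum

variable {R : Type*} [CommSemiring R]

def cutSum (x : R) (c N : ℕ) (f : ℕ → R) : R :=
  ∑ j ∈ Finset.range N, (if j < c then x else 1) * f j

theorem cutSum_eq {x : R} {c N : ℕ} (hc : c ≤ N) (f : ℕ → R) :
    cutSum x c N f = x * ∑ j ∈ Finset.range c, f j + ∑ j ∈ Finset.Ico c N, f j := by
  rw [cutSum, ← Finset.sum_range_add_sum_Ico _ hc, Finset.mul_sum]
  congr 1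
  · exact Finset.sum_congr rfl fun j hj => by rw [if_pos (Finset.mem_range.mp hj)]
  · exact Finset.sum_congr rfl fun j hj => by
      rw [if_neg (Finset.mem_Ico.mp hj).1.not_gt, one_mul]

def foldPair (x : R) (m : ℕ) (f : ℕ → R) (j : ℕ) : R :=
  if j < m then f j + f (m + j) else x * f (j - m) + f j

theorem cutSum_two_mul (x : R) (c m : ℕ) (f : ℕ → R) :
    cutSum x c (2 * m) f = ∑ j ∈ Finset.range m,
      ((if j < c then x else 1) * f j + (if m + j < c then x else 1) * f (m + j)) := by
  rw [cutSum, two_mul, Finset.sum_range_add, Finset.sum_add_distrib]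

theorem cutSum_foldPair_low (x : R) {c m : ℕ} (hc : c ≤ m) (f : ℕ → R) :
    cutSum x c (2 * m) (foldPair x m f) = cutSum x c (2 * m) f + cutSum x (c + m) (2 * m) f := by
  simp only [cutSum_two_mul, foldPair, ← Finset.sum_add_distrib]
  refine Finset.sum_congr rfl fun j hj => ?_
  have hj : j < m := Finset.mem_range.mp hj
  simp only [hj, if_true, show ¬m + j < c by omega, if_false, show j < c + m by omega,
    show m + j < c + m ↔ j < c by omega, show ¬m + j < m by omega, Nat.add_sub_cancel_left]
  ring

theorem cutSum_foldPair_high (x : R) {c m : ℕ} (hc : c ≤ m) (f : ℕ → R) :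
    cutSum x (c + m) (2 * m) (foldPair x m f) =
      x * cutSum x c (2 * m) f + cutSum x (c + m) (2 * m) f := by
  simp only [cutSum_two_mul, foldPair, Finset.mul_sum, ← Finset.sum_add_distrib]
  refine Finset.sum_congr rfl fun j hj => ?_
  have hj : j < m := Finset.mem_range.mp hj
  simp only [hj, if_true, show ¬m + j < c by omega, if_false, show j < c + m by omega,
    show m + j < c + m ↔ j < c by omega, show ¬m + j < m by omega, Nat.add_sub_cancel_left]
  ring

end CutSum

theorem mem_invSeqs {n : ℕ} {e : Fin n → ℕ} :
    e ∈ invSeqs n ↔ ∀ i : Fin n, e i < 2 * ((i : ℕ) + 1) := by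
  simp only [invSeqs, Finset.mem_filter, Finset.mem_image, Finset.mem_univ, true_and,
    and_iff_right_iff_imp]
  intro h
  exact ⟨fun i => ⟨e i, by have := h i; omega⟩, rfl⟩

theorem ev_snoc_of_lt {m : ℕ} (e : Fin m → ℕ) (v : ℕ) {k : ℕ} (hk : k < m) :
    ev (Fin.snoc e v : Fin (m + 1) → ℕ) k = ev e k := by
  simp only [ev, hk, Nat.lt_succ_of_lt hk, dif_pos]
  exact Fin.snoc_castSucc (α := fun _ => ℕ) v e ⟨k, hk⟩

theorem ev_last {m : ℕ} (e : Fin (m + 1) → ℕ) : ev e m = e (Fin.last m) :=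
  dif_pos m.lt_succ_self

theorem ev_lt_of_mem_invSeqs {m : ℕ} (hm : 1 ≤ m) {e : Fin m → ℕ} (he : e ∈ invSeqs m) :
    ev e (m - 1) < 2 * m := by
  have h := mem_invSeqs.mp he ⟨m - 1, by omega⟩
  simp only [ev, show m - 1 < m by omega, dif_pos]
  omega

theorem ascD_snoc {m : ℕ} (hm : 2 ≤ m) (e : Fin m → ℕ) (v : ℕ) :
    ascD (Fin.snoc e v : Fin (m + 1) → ℕ) =
      ascD e + if (m + 1) * ev e (m - 1) < m * v then 1 else 0 := by
  have hIco : Finset.Ico 1 (m + 1) = insert m (Finset.Ico 1 m) := by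
    ext k; simp only [Finset.mem_Ico, Finset.mem_insert]; omega
  have hlow : ∀ k ∈ Finset.Ico 1 m,
      (k + 1) * ev (Fin.snoc e v : Fin (m + 1) → ℕ) (k - 1) <
        k * ev (Fin.snoc e v : Fin (m + 1) → ℕ) k ↔ (k + 1) * ev e (k - 1) < k * ev e k := by
    intro k hk
    have hk := Finset.mem_Ico.mp hk
    rw [ev_snoc_of_lt e v (by omega), ev_snoc_of_lt e v hk.2]
  have hlast : ev (Fin.snoc e v : Fin (m + 1) → ℕ) m = v := by
    rw [ev_last, Fin.snoc_last]
  rw [ascD, ascD, ev_snoc_of_lt e v (by omega), ev_snoc_of_lt e v (by omega), hIco,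
    Finset.filter_insert, Finset.filter_congr hlow, hlast, ev_snoc_of_lt e v (by omega)]
  split_ifs <;> simp [Finset.card_insert_of_notMem, add_assoc]

theorem TD_succ_eq_sum_invSeqs {m i : ℕ} (hm : 2 ≤ m) (hi : i < 2 * (m + 1)) :
    TD (m + 1) i = ∑ e ∈ invSeqs m,
      (if (m + 1) * ev e (m - 1) < m * i then X else 1) * X ^ ascD e := by
  rw [TD, Nat.add_sub_cancel]
  refine Finset.sum_nbij' Fin.init (fun e => Fin.snoc e i) ?_ ?_ ?_ ?_ ?_
  · intro e he
    exact mem_invSeqs.mpr fun k => mem_invSeqs.mp (Finset.mem_filter.mp he).1 k.castSucc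
  · intro e he
    refine Finset.mem_filter.mpr ⟨mem_invSeqs.mpr fun k => ?_, by rw [ev_last, Fin.snoc_last]⟩
    refine Fin.lastCases ?_ (fun k => ?_) k
    · simpa using hi
    · simpa using mem_invSeqs.mp he k
  · intro e he
    have hlast : e (Fin.last m) = i := (ev_last e).symm.trans (Finset.mem_filter.mp he).2
    simp only [← hlast, Fin.snoc_init_self]
  · intro e _
    exact Fin.init_snoc _ _
  · intro e he
    have hlast : e (Fin.last m) = i := (ev_last e).symm.trans (Finset.mem_filter.mp he).2
    conv_lhs => rw [← Fin.snoc_init_self e, hlast, ascD_snoc hm, pow_add]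
    split_ifs <;> simp [mul_comm]

theorem lt_ceil_div_iff (m i j : ℕ) : j < (m * i + m) / (m + 1) ↔ (m + 1) * j < m * i := by
  rw [Nat.lt_div_iff_mul_lt m.succ_pos, Nat.succ_sub_one, Nat.add_sub_cancel, mul_comm]

theorem TD_succ {m i : ℕ} (hm : 2 ≤ m) (hi : i < 2 * (m + 1)) :
    TD (m + 1) i = cutSum X ((m * i + m) / (m + 1)) (2 * m) (TD m) := by
  have hlast : ∀ e ∈ invSeqs m, ev e (m - 1) ∈ Finset.range (2 * m) := fun e he =>
    Finset.mem_range.mpr (ev_lt_of_mem_invSeqs (by omega) he)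
  rw [TD_succ_eq_sum_invSeqs hm hi, ← Finset.sum_fiberwise_of_maps_to hlast]
  refine Finset.sum_congr rfl fun j _ => ?_
  rw [TD, Finset.mul_sum]
  refine Finset.sum_congr rfl fun e he => ?_
  simp only [(Finset.mem_filter.mp he).2, lt_ceil_div_iff]

theorem ceil_div_le {m i : ℕ} (hi : i ≤ m) : (m * i + m) / (m + 1) ≤ m :=
  Nat.div_le_of_le_mul (by nlinarith)

theorem ceil_div_shift (m i : ℕ) :
    (m * (m + 1 + i) + m) / (m + 1) = (m * i + m) / (m + 1) + m := by
  rw [show m * (m + 1 + i) + m = m * i + m + (m + 1) * m by ring,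
    Nat.add_mul_div_left _ _ m.succ_pos]

theorem KD_eq_foldPair (n : ℕ) : KD n = foldPair X n (TD n) := rfl

/-- The polynomials `K_{n,i}` satisfy the same recurrence as the `T_{n,i}`. -/
theorem K_recurrence (n i : ℕ) (hn : 3 ≤ n) (hi : i ≤ 2 * n - 1) :
    KD n i = X * ∑ j ∈ Finset.range (((n - 1) * i + n - 1) / n), KD (n - 1) j +
      ∑ j ∈ Finset.Icc (((n - 1) * i + n - 1) / n) (2 * n - 3),
        KD (n - 1) j := by
  obtain ⟨m, rfl⟩ : ∃ m, n = m + 1 := ⟨n - 1, by omega⟩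
  have hm : 2 ≤ m := by omega
  have hIcc : ∀ c, Finset.Icc c (2 * (m + 1) - 3) = Finset.Ico c (2 * m) := fun c => by
    ext; simp only [Finset.mem_Icc, Finset.mem_Ico]; omega
  simp only [Nat.add_sub_cancel, Nat.add_succ_sub_one, hIcc]
  rcases lt_or_ge i (m + 1) with hlow | hhigh
  · have hc := ceil_div_le (m := m) (i := i) (by omega)
    rw [← cutSum_eq (by omega), KD_eq_foldPair, KD_eq_foldPair, foldPair, if_pos hlow,
      TD_succ hm (by omega), TD_succ hm (by omega), ceil_div_shift, cutSum_foldPair_low X hc]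
  · obtain ⟨k, rfl⟩ : ∃ k, i = m + 1 + k := ⟨i - (m + 1), by omega⟩
    have hc := ceil_div_le (m := m) (i := k) (by omega)
    rw [ceil_div_shift, ← cutSum_eq (by omega), KD_eq_foldPair, KD_eq_foldPair, foldPair,
      if_neg (by omega), Nat.add_sub_cancel_left, TD_succ hm (by omega), TD_succ hm (by omega),
      ceil_div_shift, cutSum_foldPair_high X hc]
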